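/- (Monomial Coupling.) Let N ≥ 1 and let x, y, x', y' ∈ ℝ^N. If Σ_{n=1}^N x_n^{l−k} y_n^k = Σ_{n=1}^N (x'_n)^{l−k} (y'_n)^k for every l ∈ {1,…,N} and every integer k with 0 ≤ k ≤ l, then there exists a single permutation σ of {1,…,N} such that x_n = x'_{σ(n)} and y_n = y'_{σ(n)} for all n ∈ {1,…,N}. -/

import Mathlib

/-!
Projecting along a generic direction, `(a, b) ↦ a + t * b`, turns the bivariate moments into the
first `N` power sums of the projected values (binomial theorem), and by Newton's identities these
power sums determine a multiset of `N` reals. Choosing `t` off the finitely many slopes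
`(q₁ - p₁) / (p₂ - q₂)` makes the projection injective on all the points, so a matching of the
projected values is a matching of the points.
-/

open Finset Polynomial

theorem Multiset.eq_of_card_eq_of_esymm_eq {R : Type*} [CommRing R] [IsDomain R]
    {s t : Multiset R} (hcard : card s = card t) (h : ∀ k ≤ card s, s.esymm k = t.esymm k) :
    s = t := by
  have hprod : (s.map fun r => X - C r).prod = (t.map fun r => X - C r).prod := by
    rw [Multiset.prod_X_sub_X_eq_sum_esymm, Multiset.prod_X_sub_X_eq_sum_esymm, ← hcard]
    refine Finset.sum_congr rfl fun k hk => ?_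
    rw [h k (Nat.lt_succ_iff.mp (Finset.mem_range.mp hk))]
  simpa only [roots_multiset_prod_X_sub_C] using congrArg roots hprod

section Newton

variable {ι R : Type*} [Fintype ι]

theorem mul_esymm_map_univ_eq_sum [CommRing R] (u : ι → R) (k : ℕ) :
    k * (univ.val.map u).esymm k = (-1) ^ (k + 1) *
      ∑ a ∈ antidiagonal k with a.1 < k,
        (-1) ^ a.1 * (univ.val.map u).esymm a.1 * ∑ i, u i ^ a.2 := by
  simpa only [map_mul, map_pow, map_neg, map_one, map_natCast, map_sum, MvPolynomial.psum,
    MvPolynomial.aeval_X, MvPolynomial.aeval_esymm_eq_multiset_esymm] using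
    congrArg (MvPolynomial.aeval u) (MvPolynomial.mul_esymm_eq_sum ι R k)

theorem esymm_map_univ_eq_of_sum_pow_eq [Field R] [CharZero R] {u v : ι → R}
    (h : ∀ l ∈ Icc 1 (Fintype.card ι), ∑ i, u i ^ l = ∑ i, v i ^ l) :
    ∀ k ≤ Fintype.card ι, (univ.val.map u).esymm k = (univ.val.map v).esymm k := by
  intro k hk
  induction k using Nat.strong_induction_on with
  | _ k ih =>
    rcases Nat.eq_zero_or_pos k with rfl | hk0
    · simp [Multiset.esymm]
    · have hsum : ∑ a ∈ antidiagonal k with a.1 < k,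
            (-1) ^ a.1 * (univ.val.map u).esymm a.1 * ∑ i, u i ^ a.2 =
          ∑ a ∈ antidiagonal k with a.1 < k,
            (-1) ^ a.1 * (univ.val.map v).esymm a.1 * ∑ i, v i ^ a.2 := by
        refine Finset.sum_congr rfl fun a ha => ?_
        rw [mem_filter, HasAntidiagonal.mem_antidiagonal] at ha
        rw [ih a.1 ha.2 (by omega), h a.2 (mem_Icc.mpr ⟨by omega, by omega⟩)]
      have hk' : (k : R) ≠ 0 := by exact_mod_cast hk0.ne'
      apply mul_left_cancel₀ hk'
      rw [mul_esymm_map_univ_eq_sum, mul_esymm_map_univ_eq_sum, hsum]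

theorem map_univ_eq_of_sum_pow_eq [Field R] [CharZero R] {u v : ι → R}
    (h : ∀ l ∈ Icc 1 (Fintype.card ι), ∑ i, u i ^ l = ∑ i, v i ^ l) :
    univ.val.map u = univ.val.map v :=
  Multiset.eq_of_card_eq_of_esymm_eq (by simp) fun k hk =>
    esymm_map_univ_eq_of_sum_pow_eq h k (by simpa using hk)

end Newton

theorem Equiv.Perm.exists_eq_comp_of_map_univ_eq {ι α : Type*} [Fintype ι] [DecidableEq α]
    {f g : ι → α} (h : univ.val.map f = univ.val.map g) :
    ∃ σ : Equiv.Perm ι, ∀ i, f i = g (σ i) := by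
  have hfiber : ∀ c, Fintype.card {i // f i = c} = Fintype.card {i // g i = c} := by
    intro c
    simpa [Fintype.card_subtype, Multiset.count_map, Finset.card, Finset.filter, eq_comm] using
      congrArg (Multiset.count c) h
  exact ⟨Equiv.ofFiberEquiv fun c => Fintype.equivOfCardEq (hfiber c),
    fun i => (Equiv.ofFiberEquiv_map _ i).symm⟩

theorem exists_injOn_add_mul {K : Type*} [Field K] [Infinite K] (S : Finset (K × K)) :
    ∃ t : K, Set.InjOn (fun p : K × K => p.1 + t * p.2) S := by
  classical
  obtain ⟨t, ht⟩ := Infinite.exists_notMem_finset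
    ((S ×ˢ S).image fun pq : (K × K) × (K × K) => (pq.2.1 - pq.1.1) / (pq.1.2 - pq.2.2))
  refine ⟨t, fun p hp q hq hpq => ?_⟩
  by_cases h2 : p.2 = q.2
  · exact Prod.ext (by simpa [h2] using hpq) h2
  · refine absurd (mem_image.mpr ⟨(p, q), mem_product.mpr ⟨hp, hq⟩, ?_⟩) ht
    have hne : p.2 - q.2 ≠ 0 := sub_ne_zero.mpr h2
    field_simp
    linear_combination (-1 : K) * hpq

theorem sum_add_mul_pow {ι R : Type*} [CommSemiring R] (s : Finset ι) (u v : ι → R) (t : R)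
    (l : ℕ) :
    ∑ i ∈ s, (u i + t * v i) ^ l =
      ∑ k ∈ range (l + 1), t ^ k * l.choose k * ∑ i ∈ s, u i ^ (l - k) * v i ^ k := by
  simp_rw [add_comm (u _) (t * v _), add_pow, mul_pow, Finset.mul_sum]
  rw [Finset.sum_comm]
  exact Finset.sum_congr rfl fun k _ => Finset.sum_congr rfl fun n _ => by ring

theorem monomial_coupling_general (N : ℕ) (x y x' y' : Fin N → ℝ)
    (h : ∀ l ∈ Finset.Icc 1 N, ∀ k ≤ l,
      ∑ n, x n ^ (l - k) * y n ^ k = ∑ n, x' n ^ (l - k) * y' n ^ k) :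
    ∃ σ : Equiv.Perm (Fin N), ∀ n, x n = x' (σ n) ∧ y n = y' (σ n) := by
  set p : Fin N → ℝ × ℝ := fun n => (x n, y n)
  set p' : Fin N → ℝ × ℝ := fun n => (x' n, y' n)
  obtain ⟨t, ht⟩ := exists_injOn_add_mul (univ.image p ∪ univ.image p')
  have hproj : univ.val.map (fun n => x n + t * y n) = univ.val.map (fun n => x' n + t * y' n) := by
    refine map_univ_eq_of_sum_pow_eq fun l hl => ?_
    rw [Fintype.card_fin] at hl
    rw [sum_add_mul_pow, sum_add_mul_pow]
    exact sum_congr rfl fun k hk => by rw [h l hl k (Nat.lt_succ_iff.mp (mem_range.mp hk))]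
  obtain ⟨σ, hσ⟩ := Equiv.Perm.exists_eq_comp_of_map_univ_eq hproj
  refine ⟨σ, fun n => Prod.ext_iff.mp (@ht (p n) ?_ (p' (σ n)) ?_ (hσ n))⟩ <;> simp

/-- Monomial Coupling: if all bivariate power sums
`∑_n x_n^{l−k} y_n^k` (for `1 ≤ l ≤ N`, `0 ≤ k ≤ l`) of `(x, y)` and
`(x', y')` agree, then the multisets of pairs `{(x_n, y_n)}` and
`{(x'_n, y'_n)}` coincide. -/
theorem monomial_coupling (N : ℕ) (hN : 1 ≤ N) (x y x' y' : Fin N → ℝ)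
    (h : ∀ l ∈ Finset.Icc 1 N, ∀ k ≤ l,
      ∑ n, x n ^ (l - k) * y n ^ k = ∑ n, x' n ^ (l - k) * y' n ^ k) :
    ∃ σ : Equiv.Perm (Fin N), ∀ n, x n = x' (σ n) ∧ y n = y' (σ n) :=
  monomial_coupling_general N x y x' y' h
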